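/- arXiv:2512.12877 — 3 statements merged into one kernel-verified Lean document; each statement's English description precedes it below -/
import Mathlib

section
/- Let r̄ > 0 and let y : (0, r̄] → ℝ be differentiable with lim_{r→0⁺} y(r) = 0, satisfying the strict differential inequality y'(r) < y(r)(y(r)+2)/r for all r ∈ (0, r̄]. Then there is at most one r ∈ (0, r̄] with y(r) = −1. -/
/-!
Wherever `y r = -1`, the inequality gives `y' r < -1/r < 0`. A function that strictly decreases at
every point of a level set can only cross that level downwards, so it attains the level at most
once on an interval.
-/

open Set Filter Topology

theorem forall_le_of_hasDerivAt_neg_of_eq {f f' : ℝ → ℝ} {a b c : ℝ}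
    (hf : ∀ x ∈ Icc a b, HasDerivAt f (f' x) x) (ha : f a ≤ c)
    (hc : ∀ x ∈ Icc a b, f x = c → f' x < 0) : ∀ x ∈ Icc a b, f x ≤ c :=
  image_le_of_deriv_right_lt_deriv_boundary (B := fun _ ↦ c)
    (fun x hx ↦ (hf x hx).continuousAt.continuousWithinAt)
    (fun x hx ↦ (hf x (Ico_subset_Icc_self hx)).hasDerivWithinAt) ha
    (fun _ ↦ hasDerivAt_const _ c) (fun x hx ↦ hc x (Ico_subset_Icc_self hx))

theorem HasDerivAt.nonneg_of_isMaxOn_Icc {f : ℝ → ℝ} {f' a b : ℝ} (hf : HasDerivAt f f' b)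
    (hab : a < b) (hmax : IsMaxOn f (Icc a b) b) : 0 ≤ f' := by
  have hslope : Tendsto (slope f b) (𝓝[<] b) (𝓝 f') :=
    hf.tendsto_slope.mono_left (nhdsWithin_mono b fun _ hx ↦ ne_of_lt hx)
  refine ge_of_tendsto hslope ?_
  filter_upwards [Ioo_mem_nhdsLT hab] with x hx
  rw [slope_def_field]
  exact div_nonneg_of_nonpos (sub_nonpos.2 (hmax (Ioo_subset_Icc_self hx)))
    (sub_nonpos.2 hx.2.le)

theorem subsingleton_inter_preimage_of_hasDerivAt_neg {f f' : ℝ → ℝ} {s : Set ℝ}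
    [s.OrdConnected] {c : ℝ} (hf : ∀ x ∈ s, HasDerivAt f (f' x) x)
    (hc : ∀ x ∈ s, f x = c → f' x < 0) : (s ∩ f ⁻¹' {c}).Subsingleton := by
  suffices h : ∀ a ∈ s, ∀ b ∈ s, f a = c → f b = c → ¬a < b from
    fun a ⟨ha, hfa⟩ b ⟨hb, hfb⟩ ↦
      le_antisymm (not_lt.1 (h b hb a ha hfb hfa)) (not_lt.1 (h a ha b hb hfa hfb))
  intro a ha b hb hfa hfb hab
  have hIcc : Icc a b ⊆ s := Set.OrdConnected.out ‹_› ha hb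
  have hle : ∀ x ∈ Icc a b, f x ≤ c :=
    forall_le_of_hasDerivAt_neg_of_eq (fun x hx ↦ hf x (hIcc hx)) hfa.le
      (fun x hx ↦ hc x (hIcc hx))
  have hderiv_nonneg : 0 ≤ f' b :=
    (hf b hb).nonneg_of_isMaxOn_Icc hab fun x hx ↦ hfb ▸ hle x hx
  exact (hc b hb hfb).not_ge hderiv_nonneg

theorem stmt4_general (rb : ℝ) (y y' : ℝ → ℝ)
    (hd : ∀ r ∈ Set.Ioc 0 rb, HasDerivAt y (y' r) r)
    (hineq : ∀ r ∈ Set.Ioc 0 rb, y' r < y r * (y r + 2) / r) :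
    ∀ r₁ ∈ Set.Ioc 0 rb, ∀ r₂ ∈ Set.Ioc 0 rb, y r₁ = -1 → y r₂ = -1 → r₁ = r₂ := by
  have hdecr : ∀ r ∈ Ioc 0 rb, y r = -1 → y' r < 0 := fun r hr hyr ↦ by
    have hbound := hineq r hr
    rw [hyr, show (-1 : ℝ) * (-1 + 2) / r = -r⁻¹ by ring] at hbound
    exact hbound.trans (neg_neg_of_pos (inv_pos.2 hr.1))
  exact fun r₁ h₁ r₂ h₂ hy₁ hy₂ ↦
    subsingleton_inter_preimage_of_hasDerivAt_neg hd hdecr ⟨h₁, hy₁⟩ ⟨h₂, hy₂⟩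

theorem stmt4 (rb : ℝ) (hr : 0 < rb) (y y' : ℝ → ℝ)
    (hd : ∀ r ∈ Set.Ioc 0 rb, HasDerivAt y (y' r) r)
    (hlim : Filter.Tendsto y (nhdsWithin 0 (Set.Ioi 0)) (nhds 0))
    (hineq : ∀ r ∈ Set.Ioc 0 rb, y' r < y r * (y r + 2) / r) :
    ∀ r₁ ∈ Set.Ioc 0 rb, ∀ r₂ ∈ Set.Ioc 0 rb, y r₁ = -1 → y r₂ = -1 → r₁ = r₂ :=
  stmt4_general rb y y' hd hineq
end

section
/- Let 0 < r̄ and 0 ≤ s ≤ r ≤ r̄ with s > 0. Define t = r̄²·√((r² + s²)/(r̄⁴ + s²r²)). Then s ≤ t ≤ r̄. -/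
/-!
Squaring, `s ≤ t` amounts to `s² (r̄⁴ + s² r²) ≤ r̄⁴ (r² + s²)`, i.e. `r² (r̄⁴ - s⁴) ≥ 0`, and
`t ≤ r̄` amounts to `r̄⁴ (r² + s²) ≤ r̄² (r̄⁴ + s² r²)`, i.e. `r̄² (r̄² - r²) (r̄² - s²) ≥ 0`.
-/

namespace Real

lemma le_mul_sqrt_div {a b c x : ℝ} (hc : 0 ≤ c) (hb : 0 < b) (h : x ^ 2 * b ≤ c ^ 2 * a) :
    x ≤ c * √(a / b) := by
  rw [← sqrt_sq hc, ← sqrt_mul (sq_nonneg c), ← mul_div_assoc]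
  exact le_sqrt_of_sq_le <| (le_div_iff₀ hb).mpr h

lemma mul_sqrt_div_le {a b c y : ℝ} (hc : 0 ≤ c) (hy : 0 ≤ y) (hb : 0 < b)
    (h : c ^ 2 * a ≤ y ^ 2 * b) : c * √(a / b) ≤ y := by
  rw [← sqrt_sq hc, ← sqrt_mul (sq_nonneg c), ← mul_div_assoc]
  exact sqrt_le_iff.mpr ⟨hy, (div_le_iff₀ hb).mpr h⟩

end Real

theorem stmt8_general (rb s r : ℝ) (hs : 0 < s) (hsr : s ≤ r) (hrr : r ≤ rb) :
    s ≤ rb ^ 2 * Real.sqrt ((r ^ 2 + s ^ 2) / (rb ^ 4 + s ^ 2 * r ^ 2)) ∧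
    rb ^ 2 * Real.sqrt ((r ^ 2 + s ^ 2) / (rb ^ 4 + s ^ 2 * r ^ 2)) ≤ rb := by
  have hrb : 0 < rb := by linarith
  have hD : 0 < rb ^ 4 + s ^ 2 * r ^ 2 := by positivity
  have hs2 : 0 ≤ rb ^ 2 - s ^ 2 := sub_nonneg.mpr (pow_le_pow_left₀ hs.le (hsr.trans hrr) 2)
  have hr2 : 0 ≤ rb ^ 2 - r ^ 2 := sub_nonneg.mpr (pow_le_pow_left₀ (hs.le.trans hsr) hrr 2)
  refine ⟨Real.le_mul_sqrt_div (by positivity) hD ?_,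
    Real.mul_sqrt_div_le (by positivity) hrb.le hD ?_⟩
  · have key : (rb ^ 2) ^ 2 * (r ^ 2 + s ^ 2) - s ^ 2 * (rb ^ 4 + s ^ 2 * r ^ 2) =
        r ^ 2 * (rb ^ 2 + s ^ 2) * (rb ^ 2 - s ^ 2) := by ring
    have : 0 ≤ r ^ 2 * (rb ^ 2 + s ^ 2) * (rb ^ 2 - s ^ 2) := by positivity
    linarith
  · have key : rb ^ 2 * (rb ^ 4 + s ^ 2 * r ^ 2) - (rb ^ 2) ^ 2 * (r ^ 2 + s ^ 2) =
        rb ^ 2 * (rb ^ 2 - r ^ 2) * (rb ^ 2 - s ^ 2) := by ring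
    have : 0 ≤ rb ^ 2 * (rb ^ 2 - r ^ 2) * (rb ^ 2 - s ^ 2) := by positivity
    linarith

theorem stmt8 (rb s r : ℝ) (hrb : 0 < rb) (hs : 0 < s) (hsr : s ≤ r) (hrr : r ≤ rb) :
    s ≤ rb ^ 2 * Real.sqrt ((r ^ 2 + s ^ 2) / (rb ^ 4 + s ^ 2 * r ^ 2)) ∧
    rb ^ 2 * Real.sqrt ((r ^ 2 + s ^ 2) / (rb ^ 4 + s ^ 2 * r ^ 2)) ≤ rb :=
  stmt8_general rb s r hs hsr hrr
end

section
/- Let r : ℝ → (0,1) be a smooth function satisfying the minimal surface ODE r(1−r²)r'' = (1−2r²)(2r'² + r²(1−r²)). Define ν₀(t) = (r(t)(1−r(t)²)cos t + r'(t)sin t)/√(r'(t)² + r(t)²(1−r(t)²)). Then ν₀'(t) = r(t)²(r'(t)cos t − r(t)sin t)/√(r'(t)² + r(t)²(1−r(t)²)). In particular, ν₀'(t) = 0 if and only if r'(t)cos t = r(t)sin t, which is also exactly the condition that d/dt [r(t)cos t] = 0. -/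
/-!
Write `ν₀ = N / √Q` with `N = r(1 - r²) cos t + r' sin t` and `Q = r'² + r²(1 - r²) > 0`.
The quotient rule gives `ν₀' = (N' Q - N Q' / 2) / (Q √Q)`, and both `N'` and `Q'` are
affine in `r''`. Eliminating `r''` with the minimal surface equation collapses the numerator to
`r² (r' cos t - r sin t) Q`; since `r > 0`, this vanishes exactly where `(r cos t)' = 0`.
-/

open Real

theorem HasDerivAt.div_sqrt {f g : ℝ → ℝ} {f' g' x : ℝ} (hf : HasDerivAt f f' x)
    (hg : HasDerivAt g g' x) (hpos : 0 < g x) :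
    HasDerivAt (fun s => f s / √(g s))
      ((f' * g x - f x * g' / 2) / (g x * √(g x))) x := by
  have hsqrt : 0 < √(g x) := sqrt_pos.mpr hpos
  refine (hf.div (hg.sqrt hpos.ne') hsqrt.ne').congr_deriv ?_
  field_simp
  rw [sq_sqrt hpos.le]
  ring

theorem add_sq_mul_one_sub_sq_pos {a b : ℝ} (ha : a ∈ Set.Ioo (0 : ℝ) 1) :
    0 < b ^ 2 + a ^ 2 * (1 - a ^ 2) := by
  obtain ⟨ha0, ha1⟩ := ha
  have : 0 < a ^ 2 * (1 - a ^ 2) := by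
    apply mul_pos (by positivity)
    nlinarith
  positivity

section RotationalMinimal

variable {r r' r'' : ℝ → ℝ} {t : ℝ}

theorem hasDerivAt_normal_numerator (h1 : HasDerivAt r (r' t) t) (h2 : HasDerivAt r' (r'' t) t) :
    HasDerivAt (fun s => r s * (1 - r s ^ 2) * cos s + r' s * sin s)
      (r' t * (2 - 3 * r t ^ 2) * cos t + (r'' t - r t * (1 - r t ^ 2)) * sin t) t := by
  have h := ((h1.mul ((hasDerivAt_const t 1).sub (h1.pow 2))).mul (hasDerivAt_cos t)).add
    (h2.mul (hasDerivAt_sin t))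
  exact h.congr_deriv (by simp only [Pi.sub_apply, Pi.pow_apply, Pi.mul_apply]; ring)

theorem hasDerivAt_normal_normSq (h1 : HasDerivAt r (r' t) t) (h2 : HasDerivAt r' (r'' t) t) :
    HasDerivAt (fun s => r' s ^ 2 + r s ^ 2 * (1 - r s ^ 2))
      (2 * r' t * r'' t + 2 * r t * r' t * (1 - 2 * r t ^ 2)) t := by
  have h := (h2.pow 2).add ((h1.pow 2).mul ((hasDerivAt_const t 1).sub (h1.pow 2)))
  exact h.congr_deriv (by simp only [Pi.sub_apply, Pi.pow_apply]; ring)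

end RotationalMinimal

theorem quotient_numerator_eq_of_minimal_ode {a b c u v : ℝ}
    (hode : a * (1 - a ^ 2) * c = (1 - 2 * a ^ 2) * (2 * b ^ 2 + a ^ 2 * (1 - a ^ 2))) :
    (b * (2 - 3 * a ^ 2) * u + (c - a * (1 - a ^ 2)) * v) * (b ^ 2 + a ^ 2 * (1 - a ^ 2))
      - (a * (1 - a ^ 2) * u + b * v) * (2 * b * c + 2 * a * b * (1 - 2 * a ^ 2)) / 2
      = a ^ 2 * (b * u - a * v) * (b ^ 2 + a ^ 2 * (1 - a ^ 2)) := by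
  linear_combination (a * v - b * u) * hode

theorem stmt10 (r r' r'' : ℝ → ℝ)
    (hr : ∀ t, r t ∈ Set.Ioo (0 : ℝ) 1)
    (hd1 : ∀ t, HasDerivAt r (r' t) t)
    (hd2 : ∀ t, HasDerivAt r' (r'' t) t)
    (hode : ∀ t, r t * (1 - r t ^ 2) * r'' t
      = (1 - 2 * r t ^ 2) * (2 * r' t ^ 2 + r t ^ 2 * (1 - r t ^ 2))) :
    ∀ t : ℝ,
      HasDerivAt (fun s => (r s * (1 - r s ^ 2) * Real.cos s + r' s * Real.sin s) /
          Real.sqrt (r' s ^ 2 + r s ^ 2 * (1 - r s ^ 2)))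
        (r t ^ 2 * (r' t * Real.cos t - r t * Real.sin t) /
          Real.sqrt (r' t ^ 2 + r t ^ 2 * (1 - r t ^ 2))) t ∧
      (r t ^ 2 * (r' t * Real.cos t - r t * Real.sin t) /
          Real.sqrt (r' t ^ 2 + r t ^ 2 * (1 - r t ^ 2)) = 0 ↔
        r' t * Real.cos t = r t * Real.sin t) ∧
      HasDerivAt (fun s => r s * Real.cos s) (r' t * Real.cos t - r t * Real.sin t) t ∧
      (r' t * Real.cos t - r t * Real.sin t = 0 ↔
        r' t * Real.cos t = r t * Real.sin t) := by
  intro t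
  have hQ := add_sq_mul_one_sub_sq_pos (b := r' t) (hr t)
  have hr0 : r t ^ 2 ≠ 0 := pow_ne_zero 2 (hr t).1.ne'
  refine ⟨?_, ?_, ?_, sub_eq_zero⟩
  · convert (hasDerivAt_normal_numerator (hd1 t) (hd2 t)).div_sqrt
      (hasDerivAt_normal_normSq (hd1 t) (hd2 t)) hQ using 1
    rw [quotient_numerator_eq_of_minimal_ode (hode t)]
    field_simp
  · rw [div_eq_zero_iff, mul_eq_zero, sub_eq_zero]
    simp [hr0, (sqrt_pos.mpr hQ).ne']
  · exact ((hd1 t).mul (hasDerivAt_cos t)).congr_deriv (by ring)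
end
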